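/- arXiv:2108.02036 — 4 statements merged into one kernel-verified Lean document; each statement's English description precedes it below -/
import Mathlib

section
/- Let z_1, ..., z_m ∈ ℂ be distinct points with multiplicities n_1, ..., n_m ∈ ℕ. Let u, v, f be complex functions analytic on a neighborhood of each z_k, with v(z_k) ≠ 0 for k = 1, ..., m. Then the interpolation conditions (u/v)^{(j)}(z_k) = f^{(j)}(z_k) for all k = 1, ..., m and j = 0, 1, ..., n_k − 1 hold if and only if the conditions u^{(j)}(z_k) = (v·f)^{(j)}(z_k) for all k = 1, ..., m and j = 0, 1, ..., n_k − 1 hold. -/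
/-!
Both systems of conditions say that a certain analytic function vanishes to order at least
`n_k` at `z_k`: the first one for `u / v - f`, the second one for `u - v * f`. Near `z_k` the
second function is `v * (u / v - f)`, and multiplying by `v`, which does not vanish at `z_k`,
does not change the order of vanishing.
-/

open Topology

variable {𝕜 : Type*} [NontriviallyNormedField 𝕜]

theorem AnalyticAt.iteratedDeriv_eq_iff_natCast_le_analyticOrderAt_sub
    {E : Type*} [NormedAddCommGroup E] [NormedSpace 𝕜 E] [CharZero 𝕜] [CompleteSpace E]
    {f g : 𝕜 → E} {x : 𝕜} (hf : AnalyticAt 𝕜 f x) (hg : AnalyticAt 𝕜 g x) (n : ℕ) :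
    (∀ j < n, iteratedDeriv j f x = iteratedDeriv j g x) ↔ n ≤ analyticOrderAt (f - g) x := by
  rw [natCast_le_analyticOrderAt_iff_iteratedDeriv_eq_zero (hf.sub hg)]
  refine forall₂_congr fun j _ => ?_
  rw [iteratedDeriv_sub hf.contDiffAt hg.contDiffAt, sub_eq_zero]

theorem AnalyticAt.analyticOrderAt_mul_of_ne_zero {v h : 𝕜 → 𝕜} {x : 𝕜}
    (hv : AnalyticAt 𝕜 v x) (hvx : v x ≠ 0) (hh : AnalyticAt 𝕜 h x) :
    analyticOrderAt (v * h) x = analyticOrderAt h x := by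
  rw [analyticOrderAt_mul hv hh, hv.analyticOrderAt_eq_zero.mpr hvx, zero_add]

theorem AnalyticAt.analyticOrderAt_div_sub_eq_analyticOrderAt_sub_mul {u v f : 𝕜 → 𝕜} {x : 𝕜}
    (hu : AnalyticAt 𝕜 u x) (hv : AnalyticAt 𝕜 v x) (hf : AnalyticAt 𝕜 f x) (hvx : v x ≠ 0) :
    analyticOrderAt ((fun w => u w / v w) - f) x = analyticOrderAt (u - fun w => v w * f w) x := by
  have h_local : v * ((fun w => u w / v w) - f) =ᶠ[𝓝 x] u - fun w => v w * f w := by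
    filter_upwards [hv.continuousAt.eventually_ne hvx] with w hw
    simp only [Pi.mul_apply, Pi.sub_apply]
    field_simp
  rw [← analyticOrderAt_congr h_local,
    hv.analyticOrderAt_mul_of_ne_zero hvx ((hu.fun_div hv hvx).sub hf)]

/- STATEMENT 0: equivalence of the two systems of interpolation conditions
   (u/v)^{(j)}(z_k) = f^{(j)}(z_k)  ⟺  u^{(j)}(z_k) = (v·f)^{(j)}(z_k). -/
theorem rational_interpolation_conditions_equiv_general
    {m : ℕ} (z : Fin m → ℂ) (nn : Fin m → ℕ)
    (u v f : ℂ → ℂ)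
    (hu : ∀ k, AnalyticAt ℂ u (z k)) (hv : ∀ k, AnalyticAt ℂ v (z k))
    (hf : ∀ k, AnalyticAt ℂ f (z k)) (hvz : ∀ k, v (z k) ≠ 0) :
    (∀ k, ∀ j < nn k,
        iteratedDeriv j (fun w => u w / v w) (z k) = iteratedDeriv j f (z k))
      ↔
    (∀ k, ∀ j < nn k,
        iteratedDeriv j u (z k) = iteratedDeriv j (fun w => v w * f w) (z k)) := by
  refine forall_congr' fun k => ?_
  rw [((hu k).fun_div (hv k) (hvz k)).iteratedDeriv_eq_iff_natCast_le_analyticOrderAt_sub (hf k),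
    (hu k).iteratedDeriv_eq_iff_natCast_le_analyticOrderAt_sub ((hv k).fun_mul (hf k)),
    (hu k).analyticOrderAt_div_sub_eq_analyticOrderAt_sub_mul (hv k) (hf k) (hvz k)]

theorem rational_interpolation_conditions_equiv
    {m : ℕ} (z : Fin m → ℂ) (hz : Function.Injective z) (nn : Fin m → ℕ)
    (u v f : ℂ → ℂ)
    (hu : ∀ k, AnalyticAt ℂ u (z k)) (hv : ∀ k, AnalyticAt ℂ v (z k))
    (hf : ∀ k, AnalyticAt ℂ f (z k)) (hvz : ∀ k, v (z k) ≠ 0) :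
    (∀ k, ∀ j < nn k,
        iteratedDeriv j (fun w => u w / v w) (z k) = iteratedDeriv j f (z k))
      ↔
    (∀ k, ∀ j < nn k,
        iteratedDeriv j u (z k) = iteratedDeriv j (fun w => v w * f w) (z k)) :=
  rational_interpolation_conditions_equiv_general z nn u v f hu hv hf hvz
end

section
/- Let z_1, ..., z_N ∈ ℂ be points listed with repetitions, all lying in the open disc D(c, R), and let f be analytic on an open set containing the closed disc of center c and radius R. Let v be a polynomial with v(z_k) ≠ 0 for all k, and let u be a polynomial with deg u ≤ N − 1 such that r = u/v interpolates f at z_1, ..., z_N (counted according to multiplicities). Then for every z in D(c, R) with v(z) ≠ 0, f(z) − u(z)/v(z) = (Ω(z)/v(z)) · (2πi)^{−1} ∮_{|λ−c|=R} v(λ)f(λ)/(Ω(λ)(λ − z)) dλ. -/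
/-!
Hermite's argument. Since `u / v` interpolates `f`, the function `v f - u` vanishes at each `z k`
to at least its multiplicity, so `v f - u = Ω g` with `g` analytic on `U`. On the circle the
integrand is then `u / (Ω (λ - w)) + g / (λ - w)`. The first term integrates to zero: its
denominator has degree at least two more than its numerator, so its integral does not depend on
the radius and is `O(1 / r)` on the circle of radius `r`. The second gives `2πi g(w)` by Cauchy's
formula.
-/

open Polynomial Metric Topology Filter Asymptotics Bornology Real

section AnalyticOrder

variable {𝕜 E : Type*} [NontriviallyNormedField 𝕜] [NormedAddCommGroup E] [NormedSpace 𝕜 E]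

theorem AnalyticAt.dslope {f : 𝕜 → E} {x : 𝕜} (hf : AnalyticAt 𝕜 f x) (a : 𝕜) :
    AnalyticAt 𝕜 (dslope f a) x := by
  rcases eq_or_ne x a with rfl | hxa
  · obtain ⟨p, hp⟩ := hf
    exact ⟨_, hp.has_fpower_series_dslope_fslope⟩
  · have hslope : AnalyticAt 𝕜 (fun y => (y - a)⁻¹ • (f y - f a)) x :=
      ((analyticAt_id.sub analyticAt_const).inv (sub_ne_zero.mpr hxa)).smul
        (hf.sub analyticAt_const)
    exact hslope.congr (dslope_eventuallyEq_slope_of_ne f hxa).symm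

theorem analyticOrderAt_eq_add_analyticOrderAt_dslope {F : 𝕜 → E} {a b : 𝕜}
    (hF : AnalyticAt 𝕜 F b) (hFa : F a = 0) :
    analyticOrderAt F b = analyticOrderAt (· - a) b + analyticOrderAt (dslope F a) b := by
  have hFG : F = (· - a) • dslope F a := funext fun x => (sub_smul_dslope_of_zero hFa x).symm
  conv_lhs => rw [hFG]
  exact analyticOrderAt_smul (by fun_prop) (hF.dslope a)

theorem AnalyticOnNhd.exists_eq_prod_sub_smul {ι : Type*} [DecidableEq ι] [DecidableEq 𝕜]
    {U : Set 𝕜} {F : 𝕜 → E} (hF : AnalyticOnNhd 𝕜 F U) (s : Finset ι) (z : ι → 𝕜)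
    (hord : ∀ k ∈ s, ((s.filter fun i => z i = z k).card : ℕ∞) ≤ analyticOrderAt F (z k)) :
    ∃ g : 𝕜 → E, AnalyticOnNhd 𝕜 g U ∧ ∀ x, F x = (∏ k ∈ s, (x - z k)) • g x := by
  induction s using Finset.induction_on generalizing F with
  | empty => exact ⟨F, hF, by simp⟩
  | insert i s his ih =>
    have hord_pos : ∀ k ∈ insert i s, analyticOrderAt F (z k) ≠ 0 := fun k hk =>
      ((Nat.cast_pos.mpr (Finset.card_pos.mpr ⟨k, by simp [hk]⟩)).trans_le (hord k hk)).ne'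
    obtain ⟨-, hFi⟩ := analyticOrderAt_ne_zero.mp (hord_pos i (Finset.mem_insert_self i s))
    obtain ⟨g, hgU, hGg⟩ := ih (F := dslope F (z i)) (fun x hx => (hF x hx).dslope _) <| by
      intro k hk
      have hFk := (analyticOrderAt_ne_zero.mp (hord_pos k (Finset.mem_insert_of_mem hk))).1
      have := hord k (Finset.mem_insert_of_mem hk)
      rw [analyticOrderAt_eq_add_analyticOrderAt_dslope hFk hFi, Finset.filter_insert] at this
      by_cases hik : z i = z k
      · have hone : analyticOrderAt (· - z i) (z k) = 1 := by
          rw [hik, analyticOrderAt_id_sub_const_self]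
        rw [if_pos hik, Finset.card_insert_of_notMem (by simp [his]), hone, Nat.cast_add,
          Nat.cast_one, add_comm] at this
        exact (ENat.add_le_add_iff_left ENat.one_ne_top).mp this
      · rwa [if_neg hik, analyticOrderAt_id_sub_const_of_ne (Ne.symm hik), zero_add] at this
    refine ⟨g, hgU, fun x => ?_⟩
    rw [Finset.prod_insert his, mul_smul, ← hGg, sub_smul_dslope_of_zero hFi]

theorem natCast_le_analyticOrderAt_mul_sub_of_iteratedDeriv_div_eq [CharZero 𝕜]
    [CompleteSpace 𝕜] {f u v : 𝕜 → 𝕜} {a : 𝕜} {n : ℕ}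
    (hf : AnalyticAt 𝕜 f a) (hu : AnalyticAt 𝕜 u a) (hv : AnalyticAt 𝕜 v a) (hva : v a ≠ 0)
    (h : ∀ j < n, iteratedDeriv j (fun x => u x / v x) a = iteratedDeriv j f a) :
    (n : ℕ∞) ≤ analyticOrderAt (fun x => v x * f x - u x) a := by
  have hr : AnalyticAt 𝕜 (fun x => u x / v x) a := hu.div hv hva
  have hφ : (n : ℕ∞) ≤ analyticOrderAt (fun x => f x - u x / v x) a := by
    rw [natCast_le_analyticOrderAt_iff_iteratedDeriv_eq_zero (hf.fun_sub hr)]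
    intro j hj
    rw [iteratedDeriv_fun_sub hf.contDiffAt hr.contDiffAt, h j hj, sub_self]
  have heq : (fun x => v x * f x - u x) =ᶠ[𝓝 a] v * fun x => f x - u x / v x := by
    filter_upwards [hv.continuousAt.eventually_ne hva] with x hx
    simp [mul_sub, mul_div_cancel₀ _ hx]
  rw [analyticOrderAt_congr heq, analyticOrderAt_mul hv (hf.fun_sub hr)]
  exact hφ.trans le_add_self

end AnalyticOrder

theorem circleIntegral_eq_zero_of_isBigO_cobounded {E : Type*} [NormedAddCommGroup E]
    [NormedSpace ℂ E] [CompleteSpace E] {c : ℂ} {R : ℝ} {g : ℂ → E} (hR : 0 < R)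
    (hd : ∀ z ∉ ball c R, DifferentiableAt ℂ g z)
    (hg : g =O[cobounded ℂ] fun z => ((z - c) ^ 2)⁻¹) :
    ∮ z in C(c, R), g z = 0 := by
  obtain ⟨K, hK⟩ := hg.bound
  obtain ⟨ρ, -, hρ⟩ := (hasBasis_cobounded_compl_closedBall c).eventually_iff.mp hK
  have hbound : ∀ r, max R ρ < r → ‖∮ z in C(c, R), g z‖ ≤ 2 * π * K / r := by
    intro r hr
    have hRr : R < r := (le_max_left R ρ).trans_lt hr
    have hρr : ρ < r := (le_max_right R ρ).trans_lt hr
    rw [← Complex.circleIntegral_eq_of_differentiable_on_annulus_off_countable hR hRr.le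
      Set.countable_empty (fun z hz => ?_) (fun z hz => ?_)]
    · calc ‖∮ z in C(c, r), g z‖ ≤ 2 * π * r * (K * (r ^ 2)⁻¹) := by
            refine circleIntegral.norm_integral_le_of_norm_le_const (hR.trans hRr).le
              fun z hz => ?_
            have hzc : ‖z - c‖ = r := by simpa [dist_eq_norm] using hz
            have hzρ : z ∈ (closedBall c ρ)ᶜ := by simpa [dist_eq_norm, hzc] using hρr
            simpa [hzc] using hρ hzρ
        _ = 2 * π * K / r := by field_simp
    · exact (hd z hz.2).continuousAt.continuousWithinAt
    · exact hd z fun hzR => hz.1.2 (ball_subset_closedBall hzR)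
  have hlim : Tendsto (fun r => 2 * π * K / r) atTop (𝓝 0) :=
    tendsto_const_nhds.div_atTop tendsto_id
  exact norm_le_zero_iff.mp <|
    ge_of_tendsto hlim ((eventually_gt_atTop (max R ρ)).mono hbound)

theorem circleIntegral_eval_div_eval_eq_zero {c : ℂ} {R : ℝ} (hR : 0 < R) {p q : ℂ[X]}
    (hq : ∀ z ∉ ball c R, q.eval z ≠ 0) (hdeg : p.degree + 2 ≤ q.degree) :
    ∮ z in C(c, R), p.eval z / q.eval z = 0 := by
  refine circleIntegral_eq_zero_of_isBigO_cobounded hR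
    (fun z hz => p.differentiableAt.div q.differentiableAt (hq z hz)) ?_
  have hO : ((X - C c) ^ 2 * p).eval =O[cobounded ℂ] q.eval :=
    isBigO_cobounded_of_degree_le <| by
      rwa [degree_mul, degree_pow, degree_X_sub_C, add_comm]
  obtain ⟨K, hK0, hK⟩ := hO.exists_pos
  refine IsBigO.of_bound K ?_
  filter_upwards [hK.bound, eventually_ne_cobounded c] with z hz hzc
  rcases eq_or_ne (q.eval z) 0 with hqz | hqz
  · simp only [hqz, div_zero, norm_zero]
    positivity
  · simp only [eval_mul, eval_pow, eval_sub, eval_X, eval_C, norm_mul, norm_pow] at hz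
    have hzc' : 0 < ‖z - c‖ := norm_pos_iff.mpr (sub_ne_zero.mpr hzc)
    rw [norm_div, norm_inv, norm_pow, div_le_iff₀ (norm_pos_iff.mpr hqz)]
    field_simp
    linarith

theorem circleIntegral_eval_add_mul_div_mul_sub_eq {c w : ℂ} {R : ℝ} (hw : w ∈ ball c R)
    {Ω q : ℂ[X]} (hΩ : ∀ x ∉ ball c R, Ω.eval x ≠ 0) (hq : q.degree < Ω.degree) {g : ℂ → ℂ}
    (hg : DiffContOnCl ℂ g (ball c R)) :
    ∮ x in C(c, R), (q.eval x + Ω.eval x * g x) / (Ω.eval x * (x - w))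
      = 2 * π * Complex.I * g w := by
  have hR : 0 < R := pos_of_mem_ball hw
  have hw' : ∀ x ∉ ball c R, x - w ≠ 0 := fun x hx =>
    sub_ne_zero.mpr (ne_of_mem_of_not_mem hw hx).symm
  have hsphere : ∀ x ∈ sphere c R, x ∉ ball c R := fun x hx =>
    sphere_disjoint_ball.notMem_of_mem_left hx
  set P : ℂ[X] := Ω * (X - C w)
  have hP : ∀ x ∉ ball c R, P.eval x ≠ 0 := fun x hx => by
    simpa [P] using mul_ne_zero (hΩ x hx) (hw' x hx)
  have hdeg : q.degree + 2 ≤ P.degree := by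
    rw [degree_mul, degree_X_sub_C, ← one_add_one_eq_two, ← add_assoc]
    exact add_le_add_left (Nat.WithBot.add_one_le_of_lt hq) 1
  have hsplit : Set.EqOn (fun x => (q.eval x + Ω.eval x * g x) / (Ω.eval x * (x - w)))
      (fun x => q.eval x / P.eval x + (x - w)⁻¹ • g x) (sphere c R) := by
    intro x hx
    have hΩx := hΩ x (hsphere x hx)
    have hwx := hw' x (hsphere x hx)
    simp only [P, eval_mul, eval_sub, eval_X, eval_C, smul_eq_mul]
    field_simp
  have hint₁ : CircleIntegrable (fun x => q.eval x / P.eval x) c R :=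
    (q.continuous.continuousOn.div P.continuous.continuousOn fun x hx =>
      hP x (hsphere x hx)).circleIntegrable hR.le
  have hint₂ : CircleIntegrable (fun x => (x - w)⁻¹ • g x) c R :=
    (((continuous_id.sub continuous_const).continuousOn.inv₀ fun x hx =>
      hw' x (hsphere x hx)).smul
      (hg.continuousOn.mono (sphere_subset_closedBall.trans
        (closure_ball c hR.ne').symm.subset))).circleIntegrable hR.le
  rw [circleIntegral.integral_congr hR.le hsplit, circleIntegral.integral_add hint₁ hint₂,
    circleIntegral_eval_div_eval_eq_zero hR hP hdeg, hg.circleIntegral_sub_inv_smul hw,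
    zero_add, smul_eq_mul]

theorem rational_interpolation_remainder_circleIntegral_general
    {N : ℕ} (c : ℂ) (R : ℝ) (z : Fin N → ℂ) (hz : ∀ k, z k ∈ ball c R)
    (U : Set ℂ) (hUball : closedBall c R ⊆ U)
    (f : ℂ → ℂ) (hf : AnalyticOnNhd ℂ f U)
    (v : Polynomial ℂ) (hvz : ∀ k, v.eval (z k) ≠ 0)
    (u : Polynomial ℂ) (hu : u.degree < (N : WithBot ℕ))
    (hinterp : ∀ k : Fin N,
      ∀ j < (Finset.univ.filter fun i => z i = z k).card,
        iteratedDeriv j (fun w => u.eval w / v.eval w) (z k)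
          = iteratedDeriv j f (z k)) :
    ∀ w ∈ ball c R, v.eval w ≠ 0 →
      f w - u.eval w / v.eval w =
        ((∏ k, (w - z k)) / v.eval w) *
          ((2 * Real.pi * Complex.I)⁻¹ *
            ∮ lam in C(c, R),
              v.eval lam * f lam / ((∏ k, (lam - z k)) * (lam - w))) := by
  intro w hw hvw
  obtain ⟨g, hgU, hFg⟩ := AnalyticOnNhd.exists_eq_prod_sub_smul
    (F := fun x => v.eval x * f x - u.eval x)
    (fun x hx => ((v.differentiable.analyticAt x).mul (hf x hx)).sub
      (u.differentiable.analyticAt x)) Finset.univ z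
    fun k _ => natCast_le_analyticOrderAt_mul_sub_of_iteratedDeriv_div_eq
      (hf _ (hUball (ball_subset_closedBall (hz k)))) (u.differentiable.analyticAt _)
      (v.differentiable.analyticAt _) (hvz k) (hinterp k)
  set Ω : ℂ[X] := ∏ k, (X - C (z k))
  have hΩ_eval : ∀ x, Ω.eval x = ∏ k, (x - z k) := by simp [Ω, eval_prod]
  have hΩ : ∀ x ∉ ball c R, Ω.eval x ≠ 0 := fun x hx => by
    simpa [hΩ_eval, Finset.prod_ne_zero_iff, sub_eq_zero] using
      fun k => (ne_of_mem_of_not_mem (hz k) hx).symm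
  have hdeg : u.degree < Ω.degree := by simpa [Ω, degree_prod] using hu
  have hint := circleIntegral_eval_add_mul_div_mul_sub_eq hw hΩ hdeg
    (hgU.differentiableOn.diffContOnCl_ball hUball)
  have hvf : ∀ x, v.eval x * f x = u.eval x + Ω.eval x * g x := fun x => by
    rw [hΩ_eval, ← smul_eq_mul (∏ k, _), ← hFg]
    ring
  simp only [← hΩ_eval, hvf, hint]
  field_simp
  linear_combination hvf w

theorem rational_interpolation_remainder_circleIntegral
    {N : ℕ} (c : ℂ) (R : ℝ) (z : Fin N → ℂ) (hz : ∀ k, z k ∈ ball c R)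
    (U : Set ℂ) (hU : IsOpen U) (hUball : closedBall c R ⊆ U)
    (f : ℂ → ℂ) (hf : AnalyticOnNhd ℂ f U)
    (v : Polynomial ℂ) (hvz : ∀ k, v.eval (z k) ≠ 0)
    (u : Polynomial ℂ) (hu : u.degree < (N : WithBot ℕ))
    (hinterp : ∀ k : Fin N,
      ∀ j < (Finset.univ.filter fun i => z i = z k).card,
        iteratedDeriv j (fun w => u.eval w / v.eval w) (z k)
          = iteratedDeriv j f (z k)) :
    ∀ w ∈ ball c R, v.eval w ≠ 0 →
      f w - u.eval w / v.eval w =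
        ((∏ k, (w - z k)) / v.eval w) *
          ((2 * Real.pi * Complex.I)⁻¹ *
            ∮ lam in C(c, R),
              v.eval lam * f lam / ((∏ k, (lam - z k)) * (lam - w))) :=
  rational_interpolation_remainder_circleIntegral_general c R z hz U hUball f hf v hvz u hu hinterp
end

section
/- Let A ∈ ℂ^{n×n}, b, d ∈ ℂ^n, V ∈ ℂ^{n×n̂}, Λ ∈ ℂ^{n̂×n} with ΛV = I_{n̂}, and set Â = ΛAV, b̂ = Λb, d̂^H = d^H V. Let λ_1, ..., λ_m ∈ ℂ lie neither in σ(A) nor in σ(Â), and let κ_0, χ_0, κ_1, χ_1, ..., κ_m, χ_m be nonnegative integers. Assume the range of V contains the vectors A^j b for 0 ≤ j ≤ κ_0 − 1 and (λ_k I − A)^{−j} b for 1 ≤ j ≤ κ_k, 1 ≤ k ≤ m, and the range of Λ^H contains the vectors (A^H)^j d for 0 ≤ j ≤ χ_0 − 1 and (λ̄_k I − A^H)^{−j} d for 1 ≤ j ≤ χ_k, 1 ≤ k ≤ m. Then for all coefficients g_{j0} (0 ≤ j ≤ κ_0 + χ_0 − 1) and g_{jk} (1 ≤ j ≤ κ_k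 + χ_k, 1 ≤ k ≤ m) in ℂ, one has d^H r(A) b = d̂^H r(Â) b̂, where for a square matrix M with λ_k ∉ σ(M), r(M) := Σ_{k=1}^m Σ_{j=1}^{κ_k+χ_k} g_{jk} ((λ_k I − M)^{−1})^j + Σ_{j=0}^{κ_0+χ_0−1} g_{j0} M^j. -/
/-!
Since `Λ * V = 1`, `V * Λ` is an oblique projector fixing the range of `V`, and its adjoint fixes
the range of `Λᴴ`. Hence `Â ^ j *ᵥ Λ b = Λ *ᵥ A ^ j b` as long as the lower powers `A ^ i b` lie in
the range of `V`; the same holds for resolvents because `Λ (μ - A) V = μ - Â`, and the adjoint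
system gives the corresponding statements for `d`. A moment `dᴴ M ^ (q + p) b` with `p ≤ κ`,
`q ≤ χ` then factors through `V * Λ` between `dᴴ M ^ q` and `M ^ p b`, one of which lies in the
range where the projector acts trivially. The theorem follows by linearity in the coefficients.
-/

open Matrix

namespace Matrix

variable {R : Type*} [CommRing R] {ι ι' : Type*}

section Adjoint

variable [StarRing R]

theorem conjTranspose_smul_one_sub [DecidableEq ι] (μ : R) (A : Matrix ι ι R) :
    (μ • (1 : Matrix ι ι R) - A)ᴴ = star μ • 1 - Aᴴ := by
  rw [conjTranspose_sub, conjTranspose_smul, conjTranspose_one]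

theorem conjTranspose_compression [Fintype ι] (Λ : Matrix ι' ι R) (A : Matrix ι ι R)
    (V : Matrix ι ι' R) : (Λ * A * V)ᴴ = Vᴴ * Aᴴ * Λᴴ := by
  rw [conjTranspose_mul, conjTranspose_mul, Matrix.mul_assoc]

theorem conjTranspose_mul_conjTranspose_eq_one [Fintype ι] [Fintype ι'] [DecidableEq ι]
    [DecidableEq ι'] {V : Matrix ι ι' R} {Λ : Matrix ι' ι R} (hΛV : Λ * V = 1) :
    Vᴴ * Λᴴ = 1 := by
  rw [← conjTranspose_mul, hΛV, conjTranspose_one]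

theorem star_dotProduct_mulVec [Fintype ι] [Fintype ι'] (M : Matrix ι ι' R) (u : ι → R)
    (x : ι' → R) : star u ⬝ᵥ M *ᵥ x = star (Mᴴ *ᵥ u) ⬝ᵥ x := by
  rw [star_mulVec, conjTranspose_conjTranspose, dotProduct_mulVec]

end Adjoint

variable [Fintype ι] [Fintype ι'] [DecidableEq ι'] {V : Matrix ι ι' R} {Λ : Matrix ι' ι R}

theorem mulVec_mulVec_of_mem_range (hΛV : Λ * V = 1) {x : ι → R}
    (hx : x ∈ Set.range V.mulVec) : V *ᵥ (Λ *ᵥ x) = x := by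
  obtain ⟨y, rfl⟩ := hx
  rw [mulVec_mulVec, mulVec_mulVec, Matrix.mul_assoc, hΛV, Matrix.mul_one]

theorem compression_mulVec_of_mem_range (hΛV : Λ * V = 1) (N : Matrix ι ι R) {x : ι → R}
    (hx : x ∈ Set.range V.mulVec) : (Λ * N * V) *ᵥ (Λ *ᵥ x) = Λ *ᵥ (N *ᵥ x) := by
  rw [← mulVec_mulVec, mulVec_mulVec_of_mem_range hΛV hx, mulVec_mulVec]

variable [DecidableEq ι]

theorem pow_mulVec_eq_of_intertwine {M : Matrix ι ι R} {M' : Matrix ι' ι' R}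
    {P : (ι → R) → Prop} (hstep : ∀ y, P y → M' *ᵥ (Λ *ᵥ y) = Λ *ᵥ (M *ᵥ y)) {b : ι → R}
    {κ : ℕ} (hb : ∀ j < κ, P (M ^ j *ᵥ b)) :
    ∀ j ≤ κ, M' ^ j *ᵥ (Λ *ᵥ b) = Λ *ᵥ (M ^ j *ᵥ b) := by
  intro j hj
  induction j with
  | zero => simp
  | succ j ih =>
    rw [pow_succ', pow_succ', ← mulVec_mulVec, ← mulVec_mulVec, ih (by omega),
      hstep _ (hb j (by omega))]

theorem compression_pow_mulVec (hΛV : Λ * V = 1) (A : Matrix ι ι R) {b : ι → R} {κ : ℕ}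
    (hb : ∀ j < κ, A ^ j *ᵥ b ∈ Set.range V.mulVec) :
    ∀ j ≤ κ, (Λ * A * V) ^ j *ᵥ (Λ *ᵥ b) = Λ *ᵥ (A ^ j *ᵥ b) :=
  pow_mulVec_eq_of_intertwine (fun _ hy => compression_mulVec_of_mem_range hΛV A hy) hb

theorem compression_resolvent_mulVec (hΛV : Λ * V = 1) {A : Matrix ι ι R} {μ : R}
    (hA : IsUnit (μ • (1 : Matrix ι ι R) - A))
    (hÂ : IsUnit (μ • (1 : Matrix ι' ι' R) - Λ * A * V)) {y : ι → R}
    (hy : (μ • (1 : Matrix ι ι R) - A)⁻¹ *ᵥ y ∈ Set.range V.mulVec) :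
    (μ • (1 : Matrix ι' ι' R) - Λ * A * V)⁻¹ *ᵥ (Λ *ᵥ y)
      = Λ *ᵥ ((μ • (1 : Matrix ι ι R) - A)⁻¹ *ᵥ y) := by
  have hcompress : μ • (1 : Matrix ι' ι' R) - Λ * A * V = Λ * (μ • 1 - A) * V := by
    rw [Matrix.mul_sub, Matrix.sub_mul, Matrix.mul_smul, Matrix.smul_mul, Matrix.mul_one, hΛV]
  obtain ⟨_⟩ := hÂ.nonempty_invertible
  apply inv_mulVec_eq_vec
  rw [hcompress, compression_mulVec_of_mem_range hΛV _ hy, mulVec_mulVec y,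
    mul_nonsing_inv _ ((isUnit_iff_isUnit_det _).mp hA), one_mulVec]

theorem compression_resolvent_pow_mulVec (hΛV : Λ * V = 1) {A : Matrix ι ι R} {μ : R}
    (hA : IsUnit (μ • (1 : Matrix ι ι R) - A))
    (hÂ : IsUnit (μ • (1 : Matrix ι' ι' R) - Λ * A * V)) {b : ι → R} {κ : ℕ}
    (hb : ∀ j, 1 ≤ j → j ≤ κ → (μ • (1 : Matrix ι ι R) - A)⁻¹ ^ j *ᵥ b ∈ Set.range V.mulVec) :
    ∀ j ≤ κ, (μ • (1 : Matrix ι' ι' R) - Λ * A * V)⁻¹ ^ j *ᵥ (Λ *ᵥ b)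
      = Λ *ᵥ ((μ • (1 : Matrix ι ι R) - A)⁻¹ ^ j *ᵥ b) :=
  pow_mulVec_eq_of_intertwine (fun _ hy => compression_resolvent_mulVec hΛV hA hÂ hy)
    fun j hj => by simpa only [pow_succ', mulVec_mulVec] using hb (j + 1) (by omega) hj

variable [StarRing R]

theorem star_dotProduct_mulVec_mulVec_of_mem_range (hΛV : Λ * V = 1) {u x : ι → R}
    (h : x ∈ Set.range V.mulVec ∨ u ∈ Set.range Λᴴ.mulVec) :
    star u ⬝ᵥ V *ᵥ (Λ *ᵥ x) = star u ⬝ᵥ x := by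
  rcases h with hx | hu
  · rw [mulVec_mulVec_of_mem_range hΛV hx]
  · rw [star_dotProduct_mulVec, star_dotProduct_mulVec,
      mulVec_mulVec_of_mem_range (conjTranspose_mul_conjTranspose_eq_one hΛV) hu]

theorem star_dotProduct_pow_add_mulVec_eq (hΛV : Λ * V = 1) {M : Matrix ι ι R}
    {M' : Matrix ι' ι' R} {b d : ι → R} {p q : ℕ}
    (hcol : M' ^ p *ᵥ (Λ *ᵥ b) = Λ *ᵥ (M ^ p *ᵥ b))
    (hrow : M'ᴴ ^ q *ᵥ (Vᴴ *ᵥ d) = Vᴴ *ᵥ (Mᴴ ^ q *ᵥ d))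
    (h : M ^ p *ᵥ b ∈ Set.range V.mulVec ∨ Mᴴ ^ q *ᵥ d ∈ Set.range Λᴴ.mulVec) :
    star d ⬝ᵥ M ^ (q + p) *ᵥ b = star d ⬝ᵥ (V * M' ^ (q + p)) *ᵥ (Λ *ᵥ b) := by
  calc star d ⬝ᵥ M ^ (q + p) *ᵥ b = star (Mᴴ ^ q *ᵥ d) ⬝ᵥ M ^ p *ᵥ b := by
        rw [pow_add, ← mulVec_mulVec, star_dotProduct_mulVec, conjTranspose_pow]
    _ = star (Mᴴ ^ q *ᵥ d) ⬝ᵥ V *ᵥ (Λ *ᵥ (M ^ p *ᵥ b)) :=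
        (star_dotProduct_mulVec_mulVec_of_mem_range hΛV h).symm
    _ = star (M'ᴴ ^ q *ᵥ (Vᴴ *ᵥ d)) ⬝ᵥ M' ^ p *ᵥ (Λ *ᵥ b) := by
        rw [star_dotProduct_mulVec, hcol, hrow]
    _ = star d ⬝ᵥ (V * M' ^ (q + p)) *ᵥ (Λ *ᵥ b) := by
        rw [pow_add, ← mulVec_mulVec, ← mulVec_mulVec, star_dotProduct_mulVec V,
          star_dotProduct_mulVec (M' ^ q), conjTranspose_pow]

theorem star_dotProduct_pow_mulVec_eq_compression (hΛV : Λ * V = 1) (A : Matrix ι ι R)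
    {b d : ι → R} {κ χ : ℕ} (hb : ∀ j < κ, A ^ j *ᵥ b ∈ Set.range V.mulVec)
    (hd : ∀ j < χ, Aᴴ ^ j *ᵥ d ∈ Set.range Λᴴ.mulVec) {j : ℕ} (hj : j < κ + χ) :
    star d ⬝ᵥ A ^ j *ᵥ b = star d ⬝ᵥ (V * (Λ * A * V) ^ j) *ᵥ (Λ *ᵥ b) := by
  have hcol := compression_pow_mulVec hΛV A hb
  have hrow : ∀ q ≤ χ, (Λ * A * V)ᴴ ^ q *ᵥ (Vᴴ *ᵥ d) = Vᴴ *ᵥ (Aᴴ ^ q *ᵥ d) := by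
    rw [conjTranspose_compression]
    exact compression_pow_mulVec (conjTranspose_mul_conjTranspose_eq_one hΛV) Aᴴ hd
  rcases lt_or_ge j κ with hjκ | hκj
  · simpa using star_dotProduct_pow_add_mulVec_eq hΛV (q := 0) (hcol j hjκ.le)
      (hrow 0 (Nat.zero_le χ)) (.inl (hb j hjκ))
  · obtain ⟨q, rfl⟩ := Nat.exists_eq_add_of_le' hκj
    exact star_dotProduct_pow_add_mulVec_eq hΛV (hcol κ le_rfl) (hrow q (by omega))
      (.inr (hd q (by omega)))

theorem star_dotProduct_resolvent_pow_mulVec_eq_compression (hΛV : Λ * V = 1)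
    {A : Matrix ι ι R} {μ : R} (hA : IsUnit (μ • (1 : Matrix ι ι R) - A))
    (hÂ : IsUnit (μ • (1 : Matrix ι' ι' R) - Λ * A * V)) {b d : ι → R} {κ χ : ℕ}
    (hb : ∀ j, 1 ≤ j → j ≤ κ → (μ • (1 : Matrix ι ι R) - A)⁻¹ ^ j *ᵥ b ∈ Set.range V.mulVec)
    (hd : ∀ j, 1 ≤ j → j ≤ χ →
      (star μ • (1 : Matrix ι ι R) - Aᴴ)⁻¹ ^ j *ᵥ d ∈ Set.range Λᴴ.mulVec)
    {j : ℕ} (hj₁ : 1 ≤ j) (hj : j ≤ κ + χ) :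
    star d ⬝ᵥ (μ • (1 : Matrix ι ι R) - A)⁻¹ ^ j *ᵥ b
      = star d ⬝ᵥ (V * (μ • (1 : Matrix ι' ι' R) - Λ * A * V)⁻¹ ^ j) *ᵥ (Λ *ᵥ b) := by
  have hresA : ((μ • (1 : Matrix ι ι R) - A)⁻¹)ᴴ = (star μ • 1 - Aᴴ)⁻¹ := by
    rw [conjTranspose_nonsing_inv, conjTranspose_smul_one_sub]
  have hresÂ : ((μ • (1 : Matrix ι' ι' R) - Λ * A * V)⁻¹)ᴴ = (star μ • 1 - Vᴴ * Aᴴ * Λᴴ)⁻¹ := by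
    rw [conjTranspose_nonsing_inv, conjTranspose_smul_one_sub, conjTranspose_compression]
  have hcol := compression_resolvent_pow_mulVec hΛV hA hÂ hb
  have hrow : ∀ q ≤ χ, ((μ • (1 : Matrix ι' ι' R) - Λ * A * V)⁻¹)ᴴ ^ q *ᵥ (Vᴴ *ᵥ d)
      = Vᴴ *ᵥ (((μ • (1 : Matrix ι ι R) - A)⁻¹)ᴴ ^ q *ᵥ d) := by
    rw [hresA, hresÂ]
    refine compression_resolvent_pow_mulVec (conjTranspose_mul_conjTranspose_eq_one hΛV) ?_ ?_ hd
    · rwa [← conjTranspose_smul_one_sub, isUnit_conjTranspose]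
    · rwa [← conjTranspose_compression, ← conjTranspose_smul_one_sub, isUnit_conjTranspose]
  rcases le_or_gt j κ with hjκ | hκj
  · simpa using star_dotProduct_pow_add_mulVec_eq hΛV (q := 0) (hcol j hjκ)
      (hrow 0 (Nat.zero_le χ)) (.inl (hb j hj₁ hjκ))
  · obtain ⟨q, rfl⟩ := Nat.exists_eq_add_of_le' hκj.le
    refine star_dotProduct_pow_add_mulVec_eq hΛV (hcol κ le_rfl) (hrow q (by omega)) (.inr ?_)
    rw [hresA]
    exact hd q (by omega) (by omega)

end Matrix

theorem two_sided_rational_krylov_exactness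
    {n nh m : ℕ} (A : Matrix (Fin n) (Fin n) ℂ) (b d : Fin n → ℂ)
    (V : Matrix (Fin n) (Fin nh) ℂ) (Λ : Matrix (Fin nh) (Fin n) ℂ)
    (hΛV : Λ * V = 1)
    (Ah : Matrix (Fin nh) (Fin nh) ℂ) (hAh : Ah = Λ * A * V)
    (lam : Fin m → ℂ)
    (hlamA : ∀ k, lam k ∉ spectrum ℂ A)
    (hlamAh : ∀ k, lam k ∉ spectrum ℂ Ah)
    (κ₀ χ₀ : ℕ) (κ χ : Fin m → ℕ)
    (hVpow : ∀ j < κ₀, (A ^ j).mulVec b ∈ Set.range V.mulVec)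
    (hVres : ∀ k : Fin m, ∀ j, 1 ≤ j → j ≤ κ k →
      (((lam k • (1 : Matrix (Fin n) (Fin n) ℂ) - A)⁻¹) ^ j).mulVec b
        ∈ Set.range V.mulVec)
    (hΛpow : ∀ j < χ₀, (Aᴴ ^ j).mulVec d ∈ Set.range Λᴴ.mulVec)
    (hΛres : ∀ k : Fin m, ∀ j, 1 ≤ j → j ≤ χ k →
      ((((starRingEnd ℂ) (lam k) • (1 : Matrix (Fin n) (Fin n) ℂ) - Aᴴ)⁻¹) ^ j).mulVec d
        ∈ Set.range Λᴴ.mulVec)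
    (g₀ : ℕ → ℂ) (g : Fin m → ℕ → ℂ) :
    star d ⬝ᵥ
      ((∑ k : Fin m, ∑ j ∈ Finset.Icc 1 (κ k + χ k),
          g k j • ((lam k • (1 : Matrix (Fin n) (Fin n) ℂ) - A)⁻¹) ^ j)
        + ∑ j ∈ Finset.range (κ₀ + χ₀), g₀ j • A ^ j).mulVec b
    = star d ⬝ᵥ
      (V * ((∑ k : Fin m, ∑ j ∈ Finset.Icc 1 (κ k + χ k),
          g k j • ((lam k • (1 : Matrix (Fin nh) (Fin nh) ℂ) - Ah)⁻¹) ^ j)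
        + ∑ j ∈ Finset.range (κ₀ + χ₀), g₀ j • Ah ^ j)).mulVec (Λ.mulVec b) := by
  subst hAh
  have hunit : ∀ {p : ℕ} (M : Matrix (Fin p) (Fin p) ℂ) (μ : ℂ),
      μ ∉ spectrum ℂ M → IsUnit (μ • (1 : Matrix (Fin p) (Fin p) ℂ) - M) := fun M μ h => by
    simpa only [Algebra.algebraMap_eq_smul_one] using spectrum.notMem_iff.mp h
  simp only [starRingEnd_apply] at hΛres
  simp only [add_mulVec, sum_mulVec, smul_mulVec, Matrix.mul_add, Matrix.mul_sum,
    Matrix.mul_smul, dotProduct_add, dotProduct_sum, dotProduct_smul]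
  congr 1
  · refine Finset.sum_congr rfl fun k _ => Finset.sum_congr rfl fun j hj => ?_
    rw [Finset.mem_Icc] at hj
    rw [star_dotProduct_resolvent_pow_mulVec_eq_compression hΛV (hunit A _ (hlamA k))
      (hunit _ _ (hlamAh k)) (hVres k) (hΛres k) hj.1 hj.2]
  · refine Finset.sum_congr rfl fun j hj => ?_
    rw [star_dotProduct_pow_mulVec_eq_compression hΛV A hVpow hΛpow (Finset.mem_range.mp hj)]
end

section
/- Let A ∈ ℂ^{n×n}, b ∈ ℂ^n, V ∈ ℂ^{n×n̂} with V^H V = I_{n̂}, and set Â = V^H A V, b̂ = V^H b. Let λ_1, ..., λ_m ∈ ℂ lie neither in σ(A) nor in σ(Â), and let κ_0, κ_1, ..., κ_m be nonnegative integers. Assume the range of V contains the vectors A^j b for 0 ≤ j ≤ κ_0 − 1 and (λ_k I − A)^{−j} b for 1 ≤ j ≤ κ_k, 1 ≤ k ≤ m. Then for all coefficients g_{j0} (0 ≤ j ≤ κ_0 − 1) and g_{jk} (1 ≤ j ≤ κ_k, 1 ≤ k ≤ m) in ℂ, one has r(A) b = V r(Â) b̂, where for a square matrix M with λ_k ∉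 σ(M), r(M) := Σ_{k=1}^m Σ_{j=1}^{κ_k} g_{jk} ((λ_k I − M)^{−1})^j + Σ_{j=0}^{κ_0−1} g_{j0} M^j. -/
open Matrix

/-!
For any left inverse `W` of `V`, the compression `W * M * V` intertwines `M` with `W` on the range
of `V`: if `x = V y` then `(W M V)(W x) = W (M x)`. Each vector `Aʲ b`, resp. `(λ - A)⁻ʲ b`, arises
from the previous one by applying `A`, resp. by solving with `λ - A`, so by induction on `j` it is
mapped by `W` to the corresponding vector of the compressed problem; as it lies in the range of
`V`, it is recovered from that vector by applying `V`. Linearity then gives `r(A) b = V r(Â) b̂`.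
-/

section Compression

variable {R m n : Type*} [Fintype m] [Fintype n] [DecidableEq m] {V : Matrix n m R}
  {W : Matrix m n R}

theorem mulVec_mulVec_eq_self_of_mem_range [Semiring R] (hWV : W * V = 1) {x : n → R}
    (hx : x ∈ Set.range V.mulVec) : V *ᵥ (W *ᵥ x) = x := by
  obtain ⟨y, rfl⟩ := hx
  rw [mulVec_mulVec, mulVec_mulVec, Matrix.mul_assoc, hWV, Matrix.mul_one]

theorem mul_mul_mulVec_mulVec_of_mem_range [Semiring R] (hWV : W * V = 1) (M : Matrix n n R)
    {x : n → R} (hx : x ∈ Set.range V.mulVec) : (W * M * V) *ᵥ (W *ᵥ x) = W *ᵥ (M *ᵥ x) := by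
  rw [← mulVec_mulVec, mulVec_mulVec_eq_self_of_mem_range hWV hx, mulVec_mulVec]

variable [DecidableEq n]

theorem mulVec_pow_mulVec_of_mem_range [Semiring R] (hWV : W * V = 1) (M : Matrix n n R)
    {x : n → R} {k : ℕ} (hx : ∀ j < k, M ^ j *ᵥ x ∈ Set.range V.mulVec) :
    W *ᵥ (M ^ k *ᵥ x) = (W * M * V) ^ k *ᵥ (W *ᵥ x) := by
  induction k with
  | zero => simp
  | succ k ih =>
    rw [pow_succ', ← mulVec_mulVec,
      ← mul_mul_mulVec_mulVec_of_mem_range hWV M (hx k k.lt_succ_self),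
      ih fun j hj => hx j (hj.trans k.lt_succ_self), mulVec_mulVec, ← pow_succ']

theorem mulVec_inv_pow_mulVec_of_mem_range [CommRing R] (hWV : W * V = 1) {M : Matrix n n R}
    (hM : IsUnit M) (hWMV : IsUnit (W * M * V)) {x : n → R} {k : ℕ}
    (hx : ∀ j, 1 ≤ j → j ≤ k → M⁻¹ ^ j *ᵥ x ∈ Set.range V.mulVec) :
    W *ᵥ (M⁻¹ ^ k *ᵥ x) = (W * M * V)⁻¹ ^ k *ᵥ (W *ᵥ x) := by
  induction k with
  | zero => simp
  | succ k ih =>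
    have hstep : (W * M * V) *ᵥ (W *ᵥ (M⁻¹ ^ (k + 1) *ᵥ x)) = W *ᵥ (M⁻¹ ^ k *ᵥ x) := by
      rw [mul_mul_mulVec_mulVec_of_mem_range hWV M (hx (k + 1) k.succ_pos le_rfl),
        pow_succ', ← mulVec_mulVec, mulVec_mulVec _ M,
        Matrix.mul_nonsing_inv _ ((isUnit_iff_isUnit_det M).mp hM), one_mulVec]
    rw [pow_succ' (W * M * V)⁻¹, ← mulVec_mulVec,
      ← ih fun j hj hjk => hx j hj (hjk.trans k.le_succ), ← hstep, mulVec_mulVec _ (W * M * V)⁻¹,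
      Matrix.nonsing_inv_mul _ ((isUnit_iff_isUnit_det _).mp hWMV), one_mulVec]

end Compression

theorem mul_smul_one_sub_mul {R m n : Type*} [CommRing R] [Fintype n] [DecidableEq m]
    [DecidableEq n] {V : Matrix n m R} {W : Matrix m n R} (hWV : W * V = 1) (c : R)
    (M : Matrix n n R) : W * (c • 1 - M) * V = c • 1 - W * M * V := by
  rw [Matrix.mul_sub, Matrix.sub_mul, Matrix.mul_smul, Matrix.smul_mul, Matrix.mul_one, hWV]

theorem isUnit_smul_one_sub_of_notMem_spectrum {R n : Type*} [CommRing R] [Fintype n]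
    [DecidableEq n] {A : Matrix n n R} {c : R} (hc : c ∉ spectrum R A) : IsUnit (c • 1 - A) := by
  rwa [spectrum.notMem_iff, Algebra.algebraMap_eq_smul_one] at hc

theorem one_sided_rational_krylov_exactness
    {n nh m : ℕ} (A : Matrix (Fin n) (Fin n) ℂ) (b : Fin n → ℂ)
    (V : Matrix (Fin n) (Fin nh) ℂ) (hV : Vᴴ * V = 1)
    (Ah : Matrix (Fin nh) (Fin nh) ℂ) (hAh : Ah = Vᴴ * A * V)
    (lam : Fin m → ℂ)
    (hlamA : ∀ k, lam k ∉ spectrum ℂ A)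
    (hlamAh : ∀ k, lam k ∉ spectrum ℂ Ah)
    (κ₀ : ℕ) (κ : Fin m → ℕ)
    (hVpow : ∀ j < κ₀, (A ^ j).mulVec b ∈ Set.range V.mulVec)
    (hVres : ∀ k : Fin m, ∀ j, 1 ≤ j → j ≤ κ k →
      (((lam k • (1 : Matrix (Fin n) (Fin n) ℂ) - A)⁻¹) ^ j).mulVec b
        ∈ Set.range V.mulVec)
    (g₀ : ℕ → ℂ) (g : Fin m → ℕ → ℂ) :
    ((∑ k : Fin m, ∑ j ∈ Finset.Icc 1 (κ k),
        g k j • ((lam k • (1 : Matrix (Fin n) (Fin n) ℂ) - A)⁻¹) ^ j)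
      + ∑ j ∈ Finset.range κ₀, g₀ j • A ^ j).mulVec b
    = (V * ((∑ k : Fin m, ∑ j ∈ Finset.Icc 1 (κ k),
        g k j • ((lam k • (1 : Matrix (Fin nh) (Fin nh) ℂ) - Ah)⁻¹) ^ j)
      + ∑ j ∈ Finset.range κ₀, g₀ j • Ah ^ j)).mulVec (Vᴴ.mulVec b) := by
  have hpow : ∀ j < κ₀, A ^ j *ᵥ b = V *ᵥ (Ah ^ j *ᵥ (Vᴴ *ᵥ b)) := fun j hj => by
    rw [hAh, ← mulVec_pow_mulVec_of_mem_range hV A fun i hi => hVpow i (hi.trans hj),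
      mulVec_mulVec_eq_self_of_mem_range hV (hVpow j hj)]
  have hres : ∀ k, ∀ j ∈ Finset.Icc 1 (κ k), (lam k • 1 - A)⁻¹ ^ j *ᵥ b
      = V *ᵥ ((lam k • 1 - Ah)⁻¹ ^ j *ᵥ (Vᴴ *ᵥ b)) := fun k j hj => by
    rw [Finset.mem_Icc] at hj
    have hcompress : Vᴴ * (lam k • 1 - A) * V = lam k • 1 - Ah := by
      rw [mul_smul_one_sub_mul hV, hAh]
    rw [← hcompress, ← mulVec_inv_pow_mulVec_of_mem_range hV
      (isUnit_smul_one_sub_of_notMem_spectrum (hlamA k))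
      (hcompress ▸ isUnit_smul_one_sub_of_notMem_spectrum (hlamAh k))
      fun i hi hij => hVres k i hi (hij.trans hj.2),
      mulVec_mulVec_eq_self_of_mem_range hV (hVres k j hj.1 hj.2)]
  rw [← mulVec_mulVec]
  simp only [add_mulVec, sum_mulVec, smul_mulVec, mulVec_add, mulVec_sum, mulVec_smul]
  congr 1
  · exact Finset.sum_congr rfl fun k _ => Finset.sum_congr rfl fun j hj => by rw [hres k j hj]
  · exact Finset.sum_congr rfl fun j hj => by rw [hpow j (Finset.mem_range.mp hj)]
end
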